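/- Let h_1, h_2 be nonzero real numbers such that H = h_1ℤ + h_2ℤ is dense in ℝ, and let m ≥ 1. Define f : ℝ → ℝ by f(x) = x(x−1)···(x−(m−1)) if x ∈ H and f(x) = 0 otherwise. Then Δ_{h_1}^{m+1} f(x) = 0 and Δ_{h_2}^{m+1} f(x) = 0 for all x ∈ ℝ, f is continuous at each of the m points 0, 1, ..., m−1, and f is not a polynomial function on ℝ. -/

import Mathlib

open scoped Classical

/-!
On the subgroup `H` the function `f` is the falling factorial `x(x-1)⋯(x-m+1)`, a polynomial of
degree `m`, and off `H` it vanishes. A step `h ∈ H` never leaves `H` or its complement, so `Δ_h`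
commutes with restriction to `H`, and `Δ_h^{m+1}` kills the polynomial. Since `|f|` is dominated by
the falling factorial, `f` is continuous at its roots `0, …, m-1`. If `f` were a polynomial `p`,
density of `H` would force `p` to be the falling factorial everywhere; but `H` is countable, so
the falling factorial would vanish on the uncountable complement of `H`.
-/

open Polynomial Set Function Finset fwdDiff

theorem Polynomial.fwdDiff_iter_eval_eq_zero_of_natDegree_lt {R : Type*} [CommRing R]
    {P : R[X]} {n : ℕ} (hP : P.natDegree < n) (h : R) : Δ_[h] ^[n] P.eval = 0 := by
  funext y
  -- `Δ_h^n P` at `y` is `Δ_1^n` at `0` of `t ↦ P (h t + y)`, whose degree is at most that of `P`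
  set q := P.comp (C h * X + C y)
  have hq : q.natDegree < n :=
    calc q.natDegree ≤ P.natDegree * 1 :=
          natDegree_comp_le.trans (Nat.mul_le_mul_left _ natDegree_linear_le)
      _ < n := by rwa [mul_one]
  have := congrFun (fwdDiff_iter_eq_zero_of_degree_lt hq) 0
  rw [fwdDiff_iter_eq_sum_shift] at this ⊢
  simpa [q, add_comm y, mul_comm h] using this

theorem AddSubgroup.fwdDiff_indicator {G M : Type*} [AddCommGroup G] [AddCommGroup M]
    (H : AddSubgroup G) {h : G} (hh : h ∈ H) (g : G → M) :
    Δ_[h] ((H : Set G).indicator g) = (H : Set G).indicator (Δ_[h] g) := by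
  funext x
  by_cases hx : x ∈ H
  · simp [fwdDiff, hx, H.add_mem hx hh]
  · simp [fwdDiff, hx, (H.add_mem_cancel_right hh).not.mpr hx]

theorem AddSubgroup.fwdDiff_iter_indicator {G M : Type*} [AddCommGroup G] [AddCommGroup M]
    (H : AddSubgroup G) {h : G} (hh : h ∈ H) (n : ℕ) (g : G → M) :
    Δ_[h] ^[n] ((H : Set G).indicator g) = (H : Set G).indicator (Δ_[h] ^[n] g) :=
  (Semiconj.iterate_right (fun g ↦ (H.fwdDiff_indicator hh g).symm) n g).symm

theorem fwdDiff_iter_eq_sum_choose_mul {R : Type*} [CommRing R] (f : R → R) (h : R) (n : ℕ)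
    (x : R) :
    Δ_[h] ^[n] f x = ∑ k ∈ range (n + 1), (n.choose k : R) * (-1) ^ (n - k) * f (x + k * h) := by
  rw [fwdDiff_iter_eq_sum_shift]
  refine sum_congr rfl fun k _ ↦ ?_
  simp only [zsmul_eq_mul, nsmul_eq_mul]
  push_cast
  ring

theorem ContinuousAt.indicator_of_eq_zero {X E : Type*} [TopologicalSpace X]
    [SeminormedAddCommGroup E] {g : X → E} {x : X} (hg : ContinuousAt g x) (hx : g x = 0)
    (s : Set X) : ContinuousAt (s.indicator g) x := by
  have hsx : s.indicator g x = 0 := by simp [indicator_apply, hx]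
  rw [ContinuousAt, hsx]
  refine squeeze_zero_norm (fun y ↦ norm_indicator_le_norm_self g y) ?_
  simpa [ContinuousAt, hx] using hg.norm

theorem AddSubgroup.countable_closure_pair {G : Type*} [AddCommGroup G] (a b : G) :
    ((closure {a, b} : AddSubgroup G) : Set G).Countable := by
  refine (countable_range fun mn : ℤ × ℤ ↦ mn.1 • a + mn.2 • b).mono fun x hx ↦ ?_
  obtain ⟨m, n, rfl⟩ := mem_closure_pair.mp hx
  exact ⟨(m, n), rfl⟩

theorem Polynomial.indicator_eval_ne_eval_of_dense_of_countable {S : Set ℝ} (hd : Dense S)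
    (hc : S.Countable) {Q : ℝ[X]} (hQ : Q ≠ 0) (p : ℝ[X]) : S.indicator Q.eval ≠ p.eval := by
  intro hp
  replace hp (x : ℝ) : S.indicator Q.eval x = p.eval x := congrFun hp x
  have hpQ (x : ℝ) : p.eval x = Q.eval x :=
    congrFun (Continuous.ext_on hd p.continuous Q.continuous fun x hx ↦ by
      rw [← hp, indicator_of_mem hx]) x
  have hroots : Sᶜ ⊆ {x | Q.IsRoot x} := fun x hx ↦ show Q.eval x = 0 by
    rw [← hpQ, ← hp, indicator_of_notMem hx]
  apply Cardinal.not_countable_real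
  rw [← union_compl_self S]
  exact hc.union ((finite_setOfPred_isRoot hQ).subset hroots).countable

theorem popoviciu_optimality_general (m : ℕ) (h₁ h₂ : ℝ)
    (hdense : Dense ((AddSubgroup.closure {h₁, h₂} : AddSubgroup ℝ) : Set ℝ))
    (f : ℝ → ℝ)
    (hf : ∀ x : ℝ, f x =
      if x ∈ (AddSubgroup.closure {h₁, h₂} : AddSubgroup ℝ)
      then ∏ k ∈ Finset.range m, (x - k) else 0) :
    (∀ x : ℝ, ∑ k ∈ Finset.range (m + 2),
        ((m + 1).choose k : ℝ) * (-1) ^ (m + 1 - k) * f (x + k * h₁) = 0) ∧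
    (∀ x : ℝ, ∑ k ∈ Finset.range (m + 2),
        ((m + 1).choose k : ℝ) * (-1) ^ (m + 1 - k) * f (x + k * h₂) = 0) ∧
    (∀ k : ℕ, k < m → ContinuousAt f (k : ℝ)) ∧
    ¬∃ p : Polynomial ℝ, ∀ x : ℝ, f x = p.eval x := by
  set H : AddSubgroup ℝ := AddSubgroup.closure {h₁, h₂}
  have hfH : f = (H : Set ℝ).indicator (descPochhammer ℝ m).eval := funext fun x ↦ by
    simp [hf, indicator_apply, descPochhammer_eval_eq_prod_range]
  have hΔ {h : ℝ} (hh : h ∈ H) (x : ℝ) :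
      ∑ k ∈ range (m + 2), ((m + 1).choose k : ℝ) * (-1) ^ (m + 1 - k) * f (x + k * h) = 0 := by
    rw [← fwdDiff_iter_eq_sum_choose_mul, hfH, H.fwdDiff_iter_indicator hh,
      fwdDiff_iter_eval_eq_zero_of_natDegree_lt (by simp)]
    simp
  refine ⟨hΔ (AddSubgroup.subset_closure (by simp)), hΔ (AddSubgroup.subset_closure (by simp)),
    fun k hk ↦ ?_, ?_⟩
  · rw [hfH]
    exact (descPochhammer ℝ m).continuous.continuousAt.indicator_of_eq_zero
      (descPochhammer_eval_coe_nat_of_lt hk) _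
  · rintro ⟨p, hp⟩
    exact indicator_eval_ne_eval_of_dense_of_countable hdense (AddSubgroup.countable_closure_pair h₁ h₂)
      (monic_descPochhammer ℝ m).ne_zero p (hfH ▸ funext hp)

theorem popoviciu_optimality (m : ℕ) (hm : 1 ≤ m) (h₁ h₂ : ℝ) (hh₁ : h₁ ≠ 0) (hh₂ : h₂ ≠ 0)
    (hdense : Dense ((AddSubgroup.closure {h₁, h₂} : AddSubgroup ℝ) : Set ℝ))
    (f : ℝ → ℝ)
    (hf : ∀ x : ℝ, f x =
      if x ∈ (AddSubgroup.closure {h₁, h₂} : AddSubgroup ℝ)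
      then ∏ k ∈ Finset.range m, (x - k) else 0) :
    (∀ x : ℝ, ∑ k ∈ Finset.range (m + 2),
        ((m + 1).choose k : ℝ) * (-1) ^ (m + 1 - k) * f (x + k * h₁) = 0) ∧
    (∀ x : ℝ, ∑ k ∈ Finset.range (m + 2),
        ((m + 1).choose k : ℝ) * (-1) ^ (m + 1 - k) * f (x + k * h₂) = 0) ∧
    (∀ k : ℕ, k < m → ContinuousAt f (k : ℝ)) ∧
    ¬∃ p : Polynomial ℝ, ∀ x : ℝ, f x = p.eval x :=
  popoviciu_optimality_general m h₁ h₂ hdense f hf
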